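/- arXiv:1111.3093 — 3 statements merged into one kernel-verified Lean document; each statement's English description precedes it below -/
import Mathlib

section
/- Let n ≥ 1 and let F : ℤ_2^{n+1} → ℤ_2 be 1-Lipschitz with respect to the maximum 2-adic metric, and suppose that for every fixed z = (z_1, …, z_n) ∈ ℤ_2^n the univariate function x ↦ F(x, z_1, …, z_n) is bijective modulo 2^k for every k ≥ 1. Then for every 1-Lipschitz function f : ℤ_2 → ℤ_2 that is bijective modulo 2^k for every k ≥ 1 and arbitrary 1-Lipschitz functions g_1, …, g_n : ℤ_2 → ℤ_2, the composition x ↦ F(f(x), 2·g_1(x), …, 2·g_n(x)) is bijective modulo 2^k for every k ≥ 1. -/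
/-! A 1-Lipschitz map `ℤ_2 → ℤ_2` is bijective modulo every `2^k` exactly when it is an isometry:
a drop of the distance at level `2^m` would be a collision modulo `2^(m+1)`. For the
composition `H x = F (f x, 2 g x)`, write
`H a - H b = (F (f a, 2 g a) - F (f a, 2 g b)) + (F (f a, 2 g b) - F (f b, 2 g b))`.
The second difference has norm exactly `‖a - b‖`, since `F (·, z)` and `f` are isometries,
while the first has norm at most `‖a - b‖ / 2`. In an ultrametric space the sum then has
norm `‖a - b‖`, so `H` is again an isometry. -/

/-- The map induced by `f : ℤ_[2] → ℤ_[2]` on `ℤ/2^kℤ` (for 1-Lipschitz `f` this is the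
well-defined reduction of `f` modulo `2^k`). -/
noncomputable def inducedMod (f : ℤ_[2] → ℤ_[2]) (k : ℕ) : ZMod (2 ^ k) → ZMod (2 ^ k) :=
  fun z => PadicInt.toZModPow k (f ((z.val : ℤ_[2])))

open PadicInt

section Padic

variable {p : ℕ} [Fact p.Prime]

lemma toZModPow_eq_iff_norm_sub_le (k : ℕ) (a b : ℤ_[p]) :
    toZModPow k a = toZModPow k b ↔ ‖a - b‖ ≤ (p : ℝ) ^ (-(k : ℤ)) := by
  rw [← sub_eq_zero, ← map_sub, ← RingHom.mem_ker, ker_toZModPow, norm_le_pow_iff_mem_span_pow]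

lemma toZModPow_succ_eq_iff_norm_sub_lt (m : ℕ) (a b : ℤ_[p]) :
    toZModPow (m + 1) a = toZModPow (m + 1) b ↔ ‖a - b‖ < (p : ℝ) ^ (-(m : ℤ)) := by
  rw [toZModPow_eq_iff_norm_sub_le, norm_lt_pow_iff_norm_le_pow_sub_one]
  push_cast
  ring_nf

lemma toZModPow_natCast_val (k : ℕ) (z : ZMod (p ^ k)) : toZModPow k (z.val : ℤ_[p]) = z := by
  rw [map_natCast, ZMod.natCast_val, ZMod.cast_id]

lemma norm_sub_le_of_forall_norm_sub_le {ι : Type*} [Nonempty ι]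
    {F : (ι → ℤ_[p]) → ℤ_[p]} (hF : ∀ a b : ι → ℤ_[p], ‖F a - F b‖ ≤ ⨆ i, ‖a i - b i‖)
    {a b : ι → ℤ_[p]} {r : ℝ} (h : ∀ i, ‖a i - b i‖ ≤ r) : ‖F a - F b‖ ≤ r :=
  (hF a b).trans (ciSup_le h)

lemma norm_sub_comp_cons_eq {n : ℕ} {F : (Fin (n + 1) → ℤ_[p]) → ℤ_[p]}
    (hF : ∀ a b : Fin (n + 1) → ℤ_[p], ‖F a - F b‖ ≤ ⨆ i, ‖a i - b i‖)
    (hFiso : ∀ (z : Fin n → ℤ_[p]) (x y : ℤ_[p]), ‖F (Fin.cons x z) - F (Fin.cons y z)‖ = ‖x - y‖)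
    {f : ℤ_[p] → ℤ_[p]} (hf : ∀ a b, ‖f a - f b‖ = ‖a - b‖)
    {c : ℤ_[p]} (hc : ‖c‖ < 1)
    {g : Fin n → ℤ_[p] → ℤ_[p]} (hg : ∀ i, ∀ a b : ℤ_[p], ‖g i a - g i b‖ ≤ ‖a - b‖)
    (a b : ℤ_[p]) :
    ‖F (Fin.cons (f a) (fun i => c * g i a)) - F (Fin.cons (f b) (fun i => c * g i b))‖ =
      ‖a - b‖ := by
  rcases eq_or_ne a b with rfl | hab
  · simp
  have hclose : ‖F (Fin.cons (f a) (fun i => c * g i a)) -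
      F (Fin.cons (f a) (fun i => c * g i b))‖ < ‖a - b‖ :=
    calc _ ≤ ‖c‖ * ‖a - b‖ := by
          refine norm_sub_le_of_forall_norm_sub_le hF (Fin.cases (by simp; positivity) fun i => ?_)
          simp only [Fin.cons_succ, ← mul_sub, norm_mul]
          gcongr
          exact hg i a b
      _ < ‖a - b‖ := mul_lt_of_lt_one_left (norm_pos_iff.2 (sub_ne_zero.2 hab)) hc
  have hfar : ‖F (Fin.cons (f a) (fun i => c * g i b)) -
      F (Fin.cons (f b) (fun i => c * g i b))‖ = ‖a - b‖ := by
    rw [hFiso, hf]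
  rw [IsUltrametricDist.norm_sub_eq_max_of_norm_sub_ne_norm_sub _ _ _ (hfar ▸ hclose.ne), hfar,
    max_eq_right hclose.le]

end Padic

section InducedMod

variable {f : ℤ_[2] → ℤ_[2]}

lemma inducedMod_toZModPow (hf : ∀ a b : ℤ_[2], ‖f a - f b‖ ≤ ‖a - b‖) (k : ℕ) (a : ℤ_[2]) :
    inducedMod f k (toZModPow k a) = toZModPow k (f a) :=
  (toZModPow_eq_iff_norm_sub_le k _ _).2 <| (hf _ _).trans <|
    (toZModPow_eq_iff_norm_sub_le k _ _).1 (toZModPow_natCast_val k _)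

lemma bijective_inducedMod_of_norm_sub_le (hf : ∀ a b : ℤ_[2], ‖a - b‖ ≤ ‖f a - f b‖) (k : ℕ) :
    Function.Bijective (inducedMod f k) := by
  rw [← Finite.injective_iff_bijective]
  intro u v huv
  rw [← toZModPow_natCast_val k u, ← toZModPow_natCast_val k v,
    toZModPow_eq_iff_norm_sub_le]
  exact (hf _ _).trans ((toZModPow_eq_iff_norm_sub_le k _ _).1 huv)

lemma norm_sub_eq_of_bijective_inducedMod (hf : ∀ a b : ℤ_[2], ‖f a - f b‖ ≤ ‖a - b‖)
    (hbij : ∀ k : ℕ, 1 ≤ k → Function.Bijective (inducedMod f k)) (a b : ℤ_[2]) :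
    ‖f a - f b‖ = ‖a - b‖ := by
  rcases eq_or_ne a b with rfl | hab
  · simp
  refine le_antisymm (hf a b) (not_lt.1 fun hlt => ?_)
  set m := (a - b).valuation
  have hnorm : ‖a - b‖ = ((2 : ℕ) : ℝ) ^ (-(m : ℤ)) :=
    norm_eq_zpow_neg_valuation (sub_ne_zero.2 hab)
  have hab' : toZModPow (m + 1) a = toZModPow (m + 1) b := by
    refine (hbij (m + 1) m.succ_pos).1 ?_
    rw [inducedMod_toZModPow hf, inducedMod_toZModPow hf, toZModPow_succ_eq_iff_norm_sub_lt,
      ← hnorm]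
    exact hlt
  rw [toZModPow_succ_eq_iff_norm_sub_lt, ← hnorm] at hab'
  exact hab'.false

end InducedMod

theorem bijective_mod_comp_general
    (n : ℕ) (F : (Fin (n + 1) → ℤ_[2]) → ℤ_[2])
    (hF : ∀ a b : Fin (n + 1) → ℤ_[2], ‖F a - F b‖ ≤ ⨆ i, ‖a i - b i‖)
    (hFbij : ∀ z : Fin n → ℤ_[2], ∀ k : ℕ, 1 ≤ k →
      Function.Bijective (inducedMod (fun x => F (Fin.cons x z)) k))
    (f : ℤ_[2] → ℤ_[2]) (hf : ∀ a b : ℤ_[2], ‖f a - f b‖ ≤ ‖a - b‖)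
    (hfbij : ∀ k : ℕ, 1 ≤ k → Function.Bijective (inducedMod f k))
    (g : Fin n → ℤ_[2] → ℤ_[2]) (hg : ∀ i, ∀ a b : ℤ_[2], ‖g i a - g i b‖ ≤ ‖a - b‖) :
    ∀ k : ℕ, 1 ≤ k →
      Function.Bijective
        (inducedMod (fun x => F (Fin.cons (f x) (fun i => 2 * g i x))) k) := by
  intro k _
  have hFcons (z : Fin n → ℤ_[2]) (x y : ℤ_[2]) :
      ‖F (Fin.cons x z) - F (Fin.cons y z)‖ ≤ ‖x - y‖ :=
    norm_sub_le_of_forall_norm_sub_le hF (Fin.cases (by simp) (by simp))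
  have hFiso (z : Fin n → ℤ_[2]) :=
    norm_sub_eq_of_bijective_inducedMod (hFcons z) (hFbij z)
  have htwo : ‖(2 : ℤ_[2])‖ < 1 := (norm_lt_one_iff_dvd 2).2 (by norm_num)
  refine bijective_inducedMod_of_norm_sub_le (fun a b => ?_) k
  rw [norm_sub_comp_cons_eq hF hFiso (norm_sub_eq_of_bijective_inducedMod hf hfbij) htwo hg]

/-- If `F : ℤ_2^{n+1} → ℤ_2` is 1-Lipschitz w.r.t. the maximum 2-adic metric and, for every
fixed `z ∈ ℤ_2^n`, the map `x ↦ F(x, z)` is bijective modulo `2^k` for every `k ≥ 1`, then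
for every 1-Lipschitz `f` that is bijective modulo `2^k` for every `k ≥ 1` and arbitrary
1-Lipschitz `g_1, …, g_n`, the map `x ↦ F(f(x), 2·g_1(x), …, 2·g_n(x))` is bijective modulo
`2^k` for every `k ≥ 1`. -/
theorem bijective_mod_comp
    (n : ℕ) (hn : 1 ≤ n) (F : (Fin (n + 1) → ℤ_[2]) → ℤ_[2])
    (hF : ∀ a b : Fin (n + 1) → ℤ_[2], ‖F a - F b‖ ≤ ⨆ i, ‖a i - b i‖)
    (hFbij : ∀ z : Fin n → ℤ_[2], ∀ k : ℕ, 1 ≤ k →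
      Function.Bijective (inducedMod (fun x => F (Fin.cons x z)) k))
    (f : ℤ_[2] → ℤ_[2]) (hf : ∀ a b : ℤ_[2], ‖f a - f b‖ ≤ ‖a - b‖)
    (hfbij : ∀ k : ℕ, 1 ≤ k → Function.Bijective (inducedMod f k))
    (g : Fin n → ℤ_[2] → ℤ_[2]) (hg : ∀ i, ∀ a b : ℤ_[2], ‖g i a - g i b‖ ≤ ‖a - b‖) :
    ∀ k : ℕ, 1 ≤ k →
      Function.Bijective
        (inducedMod (fun x => F (Fin.cons (f x) (fun i => 2 * g i x))) k) :=
  bijective_mod_comp_general n F hF hFbij f hf hfbij g hg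
end

section
/- A map f : ℤ_2 → ℤ_2 is a 1-Lipschitz function that is transitive modulo 2^k for every k ≥ 1 (i.e., an ergodic T-function) if and only if there exists a 1-Lipschitz function g : ℤ_2 → ℤ_2 such that f(x) = 1 + x + 2·(g(x+1) − g(x)) for all x ∈ ℤ_2. -/
/-- `f` is transitive modulo `2^k`: the orbit of `0` under the induced map on `ℤ/2^kℤ` is
all of `ℤ/2^kℤ`. -/
def TransitiveMod (f : ℤ_[2] → ℤ_[2]) (k : ℕ) : Prop :=
  ∀ z : ZMod (2 ^ k), ∃ n : ℕ, (inducedMod f k)^[n] 0 = z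

/-!
Write `f x = 1 + x + 2 c x`. Then `f^[2^k] x = x + 2^k + 2 ∑_{j < 2^k} c (f^[j] x)`, and when `c` is
1-Lipschitz and the orbit of `x` runs through all residues modulo `2^k`, the sum is
`∑_{i < 2^k} c i` modulo `2^k`. Hence, inductively, `f` is a single cycle modulo `2^(k+1)` exactly
when `∑_{i < 2^k} c i ≡ 0 [2^k]`. Transitivity forces `f x ≡ x + 1 [2]` and `c` to be 1-Lipschitz
(being bijective modulo `2^(k+1)`, `f` maps `x + 2^k` to `f x + 2^k` there), and the vanishing of
these sums is what lets the discrete antiderivative `n ↦ ∑_{i < n} c i` extend from `ℕ` to a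
1-Lipschitz `g` with `g (x + 1) - g x = c x`. Conversely `c = g (· + 1) - g` sums to
`g (2^k) - g 0 ≡ 0 [2^k]`.
-/

open PadicInt Function Finset

section FiniteDynamics

variable {α : Type*} [Fintype α] {F : α → α} {a : α}

theorem Function.minimalPeriod_eq_card_iff :
    minimalPeriod F a = Fintype.card α ↔ a ∈ periodicPts F ∧ ∀ z, ∃ n, F^[n] a = z := by
  classical
  have hcard : #((range (minimalPeriod F a)).image (F^[·] a)) = minimalPeriod F a := by
    rw [card_image_of_injOn (by simpa using iterate_injOn_Iio_minimalPeriod (f := F) (x := a)),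
      card_range]
  constructor
  · intro h
    have hpos : 0 < minimalPeriod F a := h ▸ Fintype.card_pos_iff.2 ⟨a⟩
    refine ⟨minimalPeriod_pos_iff_mem_periodicPts.1 hpos, fun z => ?_⟩
    obtain ⟨n, -, hn⟩ := mem_image.1 ((eq_univ_of_card _ (hcard.trans h)).symm ▸ mem_univ z)
    exact ⟨n, hn⟩
  · rintro ⟨ha, hcov⟩
    have himage : (range (minimalPeriod F a)).image (F^[·] a) = univ := by
      refine eq_univ_of_forall fun z => ?_
      obtain ⟨n, rfl⟩ := hcov z
      exact mem_image.2 ⟨n % minimalPeriod F a,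
        mem_range.2 (Nat.mod_lt _ (minimalPeriod_pos_of_mem_periodicPts ha)),
        iterate_mod_minimalPeriod_eq⟩
    rw [← hcard, himage, card_univ]

theorem Function.injective_of_minimalPeriod_eq_card (h : minimalPeriod F a = Fintype.card α) :
    Injective F := by
  obtain ⟨ha, hcov⟩ := minimalPeriod_eq_card_iff.1 h
  refine Finite.injective_iff_surjective.2 fun z => ?_
  obtain ⟨n, rfl⟩ := hcov z
  exact periodicPts_subset_range (mk_mem_periodicPts (minimalPeriod_pos_of_mem_periodicPts ha)
    ((isPeriodicPt_minimalPeriod F a).apply_iterate n))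

end FiniteDynamics

theorem ZMod.injOn_natCast_add (n m : ℕ) :
    Set.InjOn (fun i : ℕ => ((m + i : ℕ) : ZMod n)) (Set.Iio n) := fun i hi j hj h => by
  rw [ZMod.natCast_eq_natCast_iff'] at h
  rw [← Nat.mod_eq_of_lt hi, ← Nat.mod_eq_of_lt hj]
  exact Nat.ModEq.add_left_cancel' m h

theorem ZMod.sum_range_comp_eq_sum_univ {M : Type*} [AddCommMonoid M] {n : ℕ} [NeZero n]
    {u : ℕ → ZMod n} (hu : Set.InjOn u (Set.Iio n)) (φ : ZMod n → M) :
    ∑ j ∈ range n, φ (u j) = ∑ z, φ z := by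
  have hinj : Set.InjOn u (range n) := by simpa using hu
  classical
  rw [← sum_image hinj, eq_univ_of_card (image u (range n))
    (by rw [card_image_of_injOn hinj, card_range, ZMod.card])]

theorem ZMod.eq_zero_or_eq_two_pow {k : ℕ} {z : ZMod (2 ^ (k + 1))}
    (hz : (z.cast : ZMod (2 ^ k)) = 0) : z = 0 ∨ z = 2 ^ k := by
  rw [ZMod.cast_eq_val, ZMod.natCast_eq_zero_iff] at hz
  obtain ⟨c, hc⟩ := hz
  have hc2 : c < 2 := by
    have := z.val_lt
    rw [hc, pow_succ] at this
    exact Nat.lt_of_mul_lt_mul_left this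
  rw [← ZMod.natCast_zmod_val z, hc]
  interval_cases c <;> simp

theorem iterate_eq_add_add_two_mul_sum {R : Type*} [CommRing R] {f c : R → R}
    (hfc : ∀ x, f x = 1 + x + 2 * c x) (n : ℕ) (x : R) :
    f^[n] x = x + n + 2 * ∑ j ∈ range n, c (f^[j] x) := by
  induction n with
  | zero => simp
  | succ n ih =>
    rw [iterate_succ_apply', hfc, sum_range_succ]
    push_cast
    linear_combination ih

namespace PadicInt

section

variable {p : ℕ} [Fact p.Prime]

theorem toZModPow_eq_iff_dvd_sub {k : ℕ} {x y : ℤ_[p]} :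
    toZModPow k x = toZModPow k y ↔ (p : ℤ_[p]) ^ k ∣ x - y := by
  rw [← sub_eq_zero, ← map_sub, ← RingHom.mem_ker, ker_toZModPow, Ideal.mem_span_singleton]

theorem toZModPow_eq_iff_norm_sub_le {k : ℕ} {x y : ℤ_[p]} :
    toZModPow k x = toZModPow k y ↔ ‖x - y‖ ≤ (p : ℝ) ^ (-k : ℤ) := by
  rw [toZModPow_eq_iff_dvd_sub, norm_le_pow_iff_mem_span_pow, Ideal.mem_span_singleton]

theorem toZModPow_eq_of_le {k l : ℕ} (hkl : k ≤ l) {x y : ℤ_[p]}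
    (h : toZModPow l x = toZModPow l y) : toZModPow k x = toZModPow k y := by
  rw [← cast_toZModPow k l hkl, h, cast_toZModPow _ _ hkl]

theorem toZModPow_natCast_val {k : ℕ} (z : ZMod (p ^ k)) : toZModPow k (z.val : ℤ_[p]) = z := by
  rw [map_natCast, ZMod.natCast_zmod_val]

theorem toZModPow_pow_self (k : ℕ) : toZModPow k ((p : ℤ_[p]) ^ k) = 0 := by
  rw [← Nat.cast_pow, map_natCast, ZMod.natCast_self]

theorem toZModPow_succ_mul_eq_iff {k : ℕ} {x y : ℤ_[p]} :
    toZModPow (k + 1) ((p : ℤ_[p]) * x) = toZModPow (k + 1) ((p : ℤ_[p]) * y) ↔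
      toZModPow k x = toZModPow k y := by
  rw [toZModPow_eq_iff_dvd_sub, toZModPow_eq_iff_dvd_sub, ← mul_sub, pow_succ',
    mul_dvd_mul_iff_left]
  exact_mod_cast (Fact.out : p.Prime).ne_zero

theorem exists_toZModPow_eq {s : ℕ → ℤ_[p]}
    (hs : ∀ k, toZModPow k (s (k + 1)) = toZModPow k (s k)) :
    ∃ y : ℤ_[p], ∀ k, toZModPow k y = toZModPow k (s k) := by
  have hval (i j : ℕ) : (((toZModPow j (s j)).val : ℤ) : ZMod (p ^ i)) = (toZModPow j (s j)).val :=
    Int.cast_natCast _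
  have hdvd (i : ℕ) : (p : ℤ) ^ i ∣
      ((toZModPow (i + 1) (s (i + 1))).val : ℤ) - (toZModPow i (s i)).val := by
    rw [← Nat.cast_pow, ← ZMod.intCast_eq_intCast_iff_dvd_sub, hval, hval, ZMod.natCast_zmod_val,
      ZMod.natCast_val, cast_toZModPow _ _ i.le_succ, hs]
  exact ⟨_, fun k => (toZModPow_ofIntSeq_of_pow_dvd_sub
    (fun i => ((toZModPow i (s i)).val : ℤ)) p hdvd k).trans (by rw [hval, ZMod.natCast_zmod_val])⟩

def IsTFunction (f : ℤ_[p] → ℤ_[p]) : Prop :=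
  ∀ k x y, toZModPow k x = toZModPow k y → toZModPow k (f x) = toZModPow k (f y)

theorem isTFunction_iff_norm_sub_le {f : ℤ_[p] → ℤ_[p]} :
    IsTFunction f ↔ ∀ x y, ‖f x - f y‖ ≤ ‖x - y‖ := by
  constructor
  · intro hf x y
    rcases eq_or_ne x y with rfl | hxy
    · simp
    have hnorm := norm_eq_zpow_neg_valuation (sub_ne_zero.2 hxy)
    rw [hnorm, ← toZModPow_eq_iff_norm_sub_le]
    exact hf _ x y (toZModPow_eq_iff_norm_sub_le.2 hnorm.le)
  · intro hf k x y h
    rw [toZModPow_eq_iff_norm_sub_le] at h ⊢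
    exact (hf x y).trans h

variable {f g c : ℤ_[p] → ℤ_[p]}

theorem IsTFunction.ext_natCast (hf : IsTFunction f) (hg : IsTFunction g)
    (h : ∀ n : ℕ, f n = g n) : f = g := by
  funext x
  refine ext_of_toZModPow.1 fun k => ?_
  have hx := (toZModPow_natCast_val (toZModPow k x)).symm
  rw [hf k _ _ hx, hg k _ _ hx, h]

theorem IsTFunction.sub_comp_add_one (hg : IsTFunction g) : IsTFunction fun x => g (x + 1) - g x :=
  fun k x y h => by
    simp only [map_sub, hg k x y h, hg k (x + 1) (y + 1) (by simp only [map_add, h])]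

theorem exists_isTFunction_natCast_eq {G : ℕ → ℤ_[p]}
    (hG : ∀ k (a b : ℕ), (a : ZMod (p ^ k)) = b → toZModPow k (G a) = toZModPow k (G b)) :
    ∃ g : ℤ_[p] → ℤ_[p], IsTFunction g ∧ ∀ n : ℕ, g n = G n := by
  have hrep (k : ℕ) (x : ℤ_[p]) : ((toZModPow k x).val : ZMod (p ^ k)) = toZModPow k x :=
    ZMod.natCast_zmod_val _
  have hlim (x : ℤ_[p]) := exists_toZModPow_eq (s := fun k => G (toZModPow k x).val) fun k =>
    hG k _ _ (by rw [hrep, ZMod.natCast_val, cast_toZModPow _ _ k.le_succ])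
  choose g hg using hlim
  refine ⟨g, fun k x y h => ?_, fun n => ext_of_toZModPow.1 fun k => ?_⟩
  · rw [hg, hg]
    exact hG k _ _ (by rw [hrep, hrep, h])
  · rw [hg]
    exact hG k _ _ (by rw [hrep, map_natCast])

theorem IsTFunction.toZModPow_sum_range_eq (hc : IsTFunction c) {k : ℕ} {u : ℕ → ℤ_[p]}
    (hu : Set.InjOn (fun j => toZModPow k (u j)) (Set.Iio (p ^ k))) :
    toZModPow k (∑ j ∈ range (p ^ k), c (u j)) = toZModPow k (∑ i ∈ range (p ^ k), c i) := by
  obtain ⟨C, hC⟩ : ∃ C : ZMod (p ^ k) → ZMod (p ^ k), ∀ x, toZModPow k (c x) = C (toZModPow k x) :=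
    ⟨fun z => toZModPow k (c z.val), fun x => hc k _ _ (toZModPow_natCast_val _).symm⟩
  have hnat : Set.InjOn (fun i : ℕ => toZModPow k (i : ℤ_[p])) (Set.Iio (p ^ k)) := by
    simpa using ZMod.injOn_natCast_add (p ^ k) 0
  simp only [map_sum, hC]
  rw [ZMod.sum_range_comp_eq_sum_univ hu, ZMod.sum_range_comp_eq_sum_univ hnat]

theorem IsTFunction.exists_sub_comp_add_one_eq (hc : IsTFunction c)
    (hsum : ∀ k, toZModPow k (∑ i ∈ range (p ^ k), c i) = 0) :
    ∃ g : ℤ_[p] → ℤ_[p], IsTFunction g ∧ ∀ x, g (x + 1) - g x = c x := by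
  set G : ℕ → ℤ_[p] := fun n => ∑ i ∈ range n, c i
  have hper (k : ℕ) : Periodic (fun n => toZModPow k (G n)) (p ^ k) := fun n => by
    have hinj : Set.InjOn (fun i => toZModPow k ((n + i : ℕ) : ℤ_[p])) (Set.Iio (p ^ k)) := by
      simpa only [map_natCast] using ZMod.injOn_natCast_add _ n
    simp only [G]
    rw [sum_range_add, map_add, hc.toZModPow_sum_range_eq hinj, hsum, add_zero]
  obtain ⟨g, hg, hgG⟩ := exists_isTFunction_natCast_eq (G := G) fun k a b h => by
    rw [ZMod.natCast_eq_natCast_iff'] at h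
    rw [← (hper k).map_mod_nat a, h, (hper k).map_mod_nat]
  refine ⟨g, hg, congrFun (hg.sub_comp_add_one.ext_natCast hc fun n => ?_)⟩
  rw [← Nat.cast_succ, hgG, hgG, sum_range_succ_sub_sum]

theorem IsTFunction.toZModPow_sum_range_sub_comp_add_one (hg : IsTFunction g) (k : ℕ) :
    toZModPow k (∑ i ∈ range (p ^ k), (g (i + 1) - g i)) = 0 := by
  have := sum_range_sub (fun i : ℕ => g i) (p ^ k)
  push_cast at this
  rw [this, map_sub, sub_eq_zero]
  exact hg k _ _ (by rw [toZModPow_pow_self, map_zero])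

end

theorem toZModPow_two_pow_ne_zero (k : ℕ) : toZModPow (k + 1) (2 ^ k : ℤ_[2]) ≠ 0 := by
  have : (2 : ℤ_[2]) ^ k = ((2 ^ k : ℕ) : ℤ_[2]) := by push_cast; rfl
  rw [this, map_natCast, Ne, ZMod.natCast_eq_zero_iff,
    Nat.pow_dvd_pow_iff_le_right (by norm_num)]
  omega

theorem toZModPow_succ_eq_add_two_pow {k : ℕ} {x y : ℤ_[2]} (h : toZModPow k x = toZModPow k y)
    (hne : toZModPow (k + 1) x ≠ toZModPow (k + 1) y) :
    toZModPow (k + 1) y = toZModPow (k + 1) (x + 2 ^ k) := by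
  have hz : ((toZModPow (k + 1) (y - x)).cast : ZMod (2 ^ k)) = 0 := by
    rw [cast_toZModPow _ _ k.le_succ, map_sub, h, sub_self]
  rcases ZMod.eq_zero_or_eq_two_pow hz with h0 | h2
  · rw [map_sub, sub_eq_zero] at h0
    exact absurd h0.symm hne
  · rw [map_sub, sub_eq_iff_eq_add] at h2
    rw [h2, map_add, map_pow, map_ofNat]
    exact add_comm _ _

namespace IsTFunction

variable {f c : ℤ_[2] → ℤ_[2]}

theorem semiconj_inducedMod (hf : IsTFunction f) (k : ℕ) :
    Semiconj (toZModPow k) f (inducedMod f k) := fun _ =>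
  hf k _ _ (toZModPow_natCast_val _).symm

theorem toZModPow_iterate (hf : IsTFunction f) (k n : ℕ) (x : ℤ_[2]) :
    toZModPow k (f^[n] x) = (inducedMod f k)^[n] (toZModPow k x) :=
  (hf.semiconj_inducedMod k).iterate_right n x

theorem isPeriodicPt_inducedMod_iff (hf : IsTFunction f) {k n : ℕ} {x : ℤ_[2]} :
    IsPeriodicPt (inducedMod f k) n (toZModPow k x) ↔ toZModPow k (f^[n] x) = toZModPow k x := by
  rw [hf.toZModPow_iterate]
  rfl

theorem one_add_add_two_mul (hc : IsTFunction c) (hfc : ∀ x, f x = 1 + x + 2 * c x) :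
    IsTFunction f := fun k x y h => by
  simp only [hfc, map_add, map_mul, h, hc k x y h]

theorem toZModPow_iterate_two_pow (hc : IsTFunction c) (hfc : ∀ x, f x = 1 + x + 2 * c x)
    {k : ℕ} {x : ℤ_[2]} (hmp : minimalPeriod (inducedMod f k) (toZModPow k x) = 2 ^ k) :
    toZModPow (k + 1) (f^[2 ^ k] x) =
      toZModPow (k + 1) (x + 2 ^ k + 2 * ∑ i ∈ range (2 ^ k), c i) := by
  have hinj : Set.InjOn (fun j => toZModPow k (f^[j] x)) (Set.Iio (2 ^ k)) := by
    simpa only [(hc.one_add_add_two_mul hfc).toZModPow_iterate, hmp]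
      using iterate_injOn_Iio_minimalPeriod (f := inducedMod f k) (x := toZModPow k x)
  have hsum := toZModPow_succ_mul_eq_iff.2 (hc.toZModPow_sum_range_eq hinj)
  rw [Nat.cast_ofNat] at hsum
  rw [iterate_eq_add_add_two_mul_sum hfc, map_add, hsum, ← map_add, Nat.cast_pow, Nat.cast_ofNat]

theorem minimalPeriod_inducedMod_zero (hf : IsTFunction f) {k : ℕ} (hk : TransitiveMod f k)
    (hk1 : TransitiveMod f (k + 1)) : minimalPeriod (inducedMod f k) 0 = 2 ^ k := by
  refine (minimalPeriod_eq_card_iff.2 ⟨?_, hk⟩).trans (ZMod.card _)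
  -- the orbit of `0` modulo `2 ^ (k + 1)` reaches `2 ^ k`, so modulo `2 ^ k` it returns to `0`
  obtain ⟨n, hn⟩ := hk1 (toZModPow (k + 1) (2 ^ k))
  rw [← map_zero (toZModPow (k + 1)), ← hf.toZModPow_iterate] at hn
  refine mk_mem_periodicPts (n := n) (Nat.pos_of_ne_zero ?_) ?_
  · rintro rfl
    exact toZModPow_two_pow_ne_zero k (hn.symm.trans (map_zero _))
  · rw [← map_zero (toZModPow k), hf.isPeriodicPt_inducedMod_iff, toZModPow_eq_of_le k.le_succ hn,
      map_zero]
    simpa using toZModPow_pow_self (p := 2) k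

theorem toZModPow_iterate_two_pow_zero (hf : IsTFunction f) (hT : ∀ k, TransitiveMod f k)
    (k : ℕ) : toZModPow (k + 1) (f^[2 ^ k] 0) = toZModPow (k + 1) (2 ^ k) := by
  have hk := hf.minimalPeriod_inducedMod_zero (hT k) (hT (k + 1))
  have hk1 := hf.minimalPeriod_inducedMod_zero (hT (k + 1)) (hT (k + 2))
  rw [← map_zero (toZModPow _)] at hk hk1
  have hret : toZModPow k (f^[2 ^ k] 0) = toZModPow k 0 := by
    have := isPeriodicPt_minimalPeriod (inducedMod f k) (toZModPow k 0)
    rwa [hk, hf.isPeriodicPt_inducedMod_iff] at this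
  have hne : toZModPow (k + 1) (f^[2 ^ k] 0) ≠ toZModPow (k + 1) 0 := by
    rw [Ne, ← hf.isPeriodicPt_inducedMod_iff]
    exact not_isPeriodicPt_of_pos_of_lt_minimalPeriod (by positivity)
      (by rw [hk1]; exact Nat.pow_lt_pow_right (by norm_num) k.lt_succ_self)
  rw [toZModPow_succ_eq_add_two_pow hret.symm hne.symm, zero_add]

theorem toZModPow_succ_sub_eq (hf : IsTFunction f) (hT : ∀ k, TransitiveMod f k) {k : ℕ}
    {x y : ℤ_[2]} (h : toZModPow k x = toZModPow k y) :
    toZModPow (k + 1) (f y - y) = toZModPow (k + 1) (f x - x) := by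
  by_cases hxy : toZModPow (k + 1) x = toZModPow (k + 1) y
  · rw [map_sub, map_sub, hf _ _ _ hxy, hxy]
  have hinj : Injective (inducedMod f (k + 1)) := injective_of_minimalPeriod_eq_card
    ((hf.minimalPeriod_inducedMod_zero (hT (k + 1)) (hT (k + 2))).trans (ZMod.card _).symm)
  have hfxy : toZModPow (k + 1) (f x) ≠ toZModPow (k + 1) (f y) := by
    rwa [hf.semiconj_inducedMod, hf.semiconj_inducedMod, hinj.ne_iff]
  rw [map_sub, map_sub, toZModPow_succ_eq_add_two_pow h hxy,
    toZModPow_succ_eq_add_two_pow (hf k x y h) hfxy, map_add, map_add]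
  ring

theorem exists_eq_one_add_add_two_mul (hf : IsTFunction f) (hT : ∀ k, TransitiveMod f k) :
    ∃ c : ℤ_[2] → ℤ_[2], IsTFunction c ∧ ∀ x, f x = 1 + x + 2 * c x := by
  -- `f x - x ≡ f 0 - 0 ≡ 1 [2]`, the case `k = 0` of `toZModPow_succ_sub_eq`
  have hodd (x : ℤ_[2]) : (2 : ℤ_[2]) ∣ f x - x - 1 := by
    have h1 : toZModPow 1 (f 0 - 0) = toZModPow 1 1 := by
      have := hf.toZModPow_iterate_two_pow_zero hT 0
      rwa [pow_zero, iterate_one, ← sub_zero (f 0)] at this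
    have h0 : toZModPow 0 0 = toZModPow 0 x := toZModPow_eq_iff_dvd_sub.2 (by simp)
    simpa using toZModPow_eq_iff_dvd_sub.1 ((hf.toZModPow_succ_sub_eq hT h0).trans h1)
  choose c hc using hodd
  refine ⟨c, fun k x y h => ?_, fun x => by linear_combination hc x⟩
  refine toZModPow_succ_mul_eq_iff.1 ?_
  rw [Nat.cast_ofNat, ← hc, ← hc, sub_eq_add_neg (f x - x), sub_eq_add_neg (f y - y), map_add,
    map_add, hf.toZModPow_succ_sub_eq hT h]

theorem toZModPow_sum_range_eq_zero (hT : ∀ k, TransitiveMod f k) (hc : IsTFunction c)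
    (hfc : ∀ x, f x = 1 + x + 2 * c x) (k : ℕ) :
    toZModPow k (∑ i ∈ range (2 ^ k), c i) = 0 := by
  have hf := hc.one_add_add_two_mul hfc
  have hmp := hf.minimalPeriod_inducedMod_zero (hT k) (hT (k + 1))
  rw [← map_zero (toZModPow k)] at hmp
  have h := (hc.toZModPow_iterate_two_pow hfc hmp).symm.trans
    (hf.toZModPow_iterate_two_pow_zero hT k)
  rw [zero_add, map_add, add_eq_left] at h
  have := (toZModPow_succ_mul_eq_iff (k := k) (x := ∑ i ∈ range (2 ^ k), c i) (y := 0)).1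
    (by rw [Nat.cast_ofNat, mul_zero, map_zero, h])
  rwa [map_zero] at this

theorem minimalPeriod_inducedMod_eq (hc : IsTFunction c) (hfc : ∀ x, f x = 1 + x + 2 * c x)
    (hsum : ∀ k, toZModPow k (∑ i ∈ range (2 ^ k), c i) = 0) (k : ℕ) (x : ℤ_[2]) :
    minimalPeriod (inducedMod f k) (toZModPow k x) = 2 ^ k := by
  have hf := hc.one_add_add_two_mul hfc
  induction k generalizing x with
  | zero =>
    have := ZMod.subsingleton_iff.2 (pow_zero 2)
    rw [minimalPeriod_eq_one_of_subsingleton, pow_zero]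
  | succ k ih =>
    have hsum2 : toZModPow (k + 1) (2 * ∑ i ∈ range (2 ^ k), c i) = 0 := by
      have := toZModPow_succ_mul_eq_iff.2 ((hsum k).trans (map_zero _).symm)
      rwa [Nat.cast_ofNat, mul_zero, map_zero] at this
    have hstep (y : ℤ_[2]) : toZModPow (k + 1) (f^[2 ^ k] y) =
        toZModPow (k + 1) y + toZModPow (k + 1) (2 ^ k) := by
      rw [hc.toZModPow_iterate_two_pow hfc (ih y), map_add, hsum2, add_zero, map_add]
    refine Nat.eq_prime_pow_of_dvd_least_prime_pow Nat.prime_two (fun hdvd => ?_) ?_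
    · have := isPeriodicPt_iff_minimalPeriod_dvd.2 hdvd
      rw [hf.isPeriodicPt_inducedMod_iff, hstep, add_eq_left] at this
      exact toZModPow_two_pow_ne_zero k this
    · apply IsPeriodicPt.minimalPeriod_dvd
      have hsplit : f^[2 ^ (k + 1)] x = f^[2 ^ k] (f^[2 ^ k] x) := by
        rw [← iterate_add_apply, ← two_mul, ← pow_succ']
      rw [hf.isPeriodicPt_inducedMod_iff, hsplit, hstep, hstep,
        add_assoc, ← map_add, ← two_mul, ← pow_succ', add_eq_left]
      simpa using toZModPow_pow_self (p := 2) (k + 1)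

theorem transitiveMod (hc : IsTFunction c) (hfc : ∀ x, f x = 1 + x + 2 * c x)
    (hsum : ∀ k, toZModPow k (∑ i ∈ range (2 ^ k), c i) = 0) (k : ℕ) : TransitiveMod f k := by
  have hmp := hc.minimalPeriod_inducedMod_eq hfc hsum k 0
  rw [map_zero] at hmp
  exact (minimalPeriod_eq_card_iff.1 (hmp.trans (ZMod.card _).symm)).2

end IsTFunction

end PadicInt

theorem transitiveMod_zero (f : ℤ_[2] → ℤ_[2]) : TransitiveMod f 0 :=
  fun _ => ⟨0, (ZMod.subsingleton_iff.2 (pow_zero 2)).elim _ _⟩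

/-- A map `f : ℤ_2 → ℤ_2` is an ergodic T-function (a 1-Lipschitz function that is transitive
modulo `2^k` for every `k ≥ 1`) if and only if `f x = 1 + x + 2·(g(x+1) − g(x))` for a
suitable 1-Lipschitz function `g : ℤ_2 → ℤ_2`. -/
theorem ergodic_iff_delta_form
    (f : ℤ_[2] → ℤ_[2]) :
    ((∀ a b : ℤ_[2], ‖f a - f b‖ ≤ ‖a - b‖) ∧
        ∀ k : ℕ, 1 ≤ k → TransitiveMod f k) ↔
      ∃ g : ℤ_[2] → ℤ_[2], (∀ a b : ℤ_[2], ‖g a - g b‖ ≤ ‖a - b‖) ∧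
        ∀ x : ℤ_[2], f x = 1 + x + 2 * (g (x + 1) - g x) := by
  simp only [← isTFunction_iff_norm_sub_le]
  constructor
  · rintro ⟨hf, hT⟩
    have hT' (k : ℕ) : TransitiveMod f k :=
      k.eq_zero_or_pos.elim (fun hk => hk ▸ transitiveMod_zero f) (hT k)
    obtain ⟨c, hc, hfc⟩ := hf.exists_eq_one_add_add_two_mul hT'
    obtain ⟨g, hg, hgc⟩ := hc.exists_sub_comp_add_one_eq (hc.toZModPow_sum_range_eq_zero hT' hfc)
    exact ⟨g, hg, fun x => by rw [hfc, hgc]⟩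
  · rintro ⟨g, hg, hfg⟩
    have hc := hg.sub_comp_add_one
    exact ⟨hc.one_add_add_two_mul hfg, fun k _ =>
      hc.transitiveMod hfg hg.toZModPow_sum_range_sub_comp_add_one k⟩
end

section
/- A map f : ℤ_2 → ℤ_2 is a 1-Lipschitz function that is bijective modulo 2^k for every k ≥ 1 (i.e., a measure-preserving T-function) if and only if it can be represented as f(x) = b_0·χ(0,x) + b_1·χ(1,x) + Σ_{m=2}^∞ 2^{⌊log_2 m⌋}·b_m·χ(m,x), where b_m ∈ ℤ_2 and the following conditions hold simultaneously: (1) b_0 + b_1 ≡ 1 (mod 2); (2) b_m ≡ 1 (mod 2) for all m ≥ 2. -/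
/-- The van der Put characteristic function `χ(m,·)`: the characteristic function (with values
in `{0,1} ⊆ ℤ_2`) of the ball `m + 2^{⌊log_2 m⌋+1}ℤ_2`, with the convention `⌊log_2 0⌋ = 0`. -/
noncomputable def vdpChi (m : ℕ) (x : ℤ_[2]) : ℤ_[2] :=
  if ‖x - (m : ℤ_[2])‖ ≤ (2 : ℝ) ^ (-((Nat.log 2 m : ℤ) + 1)) then 1 else 0

/-!
A 1-Lipschitz `f` is the sum of its van der Put series: both sides are 1-Lipschitz, hence
continuous, and they agree on the dense subset `ℕ` because removing the leading binary digit of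
`n ≥ 2` changes the series by exactly `2^⌊log₂ n⌋ bₙ`, so `bₙ` is forced to be
`(f(n) - f(n - 2^⌊log₂ n⌋)) / 2^⌊log₂ n⌋`, a `2`-adic integer by the Lipschitz condition.
Given bijectivity modulo `2^k`, bijectivity modulo `2^(k+1)` amounts to
`f(n) ≢ f(n - 2^k) (mod 2^(k+1))` for `2^k ≤ n < 2^(k+1)`, i.e. to `bₙ` being odd; at the
bottom level, bijectivity modulo `2` means `f(1) - f(0) = b₁ - b₀` is odd.
-/

open PadicInt Filter Topology

section Compatible

variable {p : ℕ} [Fact p.Prime]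

theorem PadicInt.norm_le_pow_iff_dvd (x : ℤ_[p]) (n : ℕ) :
    ‖x‖ ≤ (p : ℝ) ^ (-n : ℤ) ↔ (p : ℤ_[p]) ^ n ∣ x := by
  rw [norm_le_pow_iff_mem_span_pow, Ideal.mem_span_singleton]

theorem PadicInt.pow_dvd_natCast_sub_natCast_iff (k a b : ℕ) :
    (p : ℤ_[p]) ^ k ∣ (a : ℤ_[p]) - b ↔ a ≡ b [MOD p ^ k] := by
  rw [show (a : ℤ_[p]) - b = ((a - b : ℤ) : ℤ_[p]) by push_cast; ring, pow_p_dvd_int_iff,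
    Nat.ModEq.comm, Nat.modEq_iff_dvd]
  push_cast
  rfl

theorem PadicInt.pow_dvd_sub_iff_toZModPow_eq (k : ℕ) (x y : ℤ_[p]) :
    (p : ℤ_[p]) ^ k ∣ x - y ↔ toZModPow k x = toZModPow k y := by
  rw [← Ideal.mem_span_singleton, ← ker_toZModPow, RingHom.mem_ker, map_sub, sub_eq_zero]

theorem PadicInt.pow_dvd_tsum {ι : Type*} {k : ℕ} {c : ι → ℤ_[p]}
    (h : ∀ i, (p : ℤ_[p]) ^ k ∣ c i) : (p : ℤ_[p]) ^ k ∣ ∑' i, c i := by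
  rw [← norm_le_pow_iff_dvd]
  exact IsUltrametricDist.norm_tsum_le_of_forall_le_of_nonneg (by positivity)
    fun i => (norm_le_pow_iff_dvd _ _).2 (h i)

/-- A compatible function in Anashin's terminology. -/
def IsCompatible (f : ℤ_[p] → ℤ_[p]) : Prop :=
  ∀ (k : ℕ) (x y : ℤ_[p]), (p : ℤ_[p]) ^ k ∣ x - y → (p : ℤ_[p]) ^ k ∣ f x - f y

theorem isCompatible_iff_norm_sub_le {f : ℤ_[p] → ℤ_[p]} :
    IsCompatible f ↔ ∀ x y, ‖f x - f y‖ ≤ ‖x - y‖ := by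
  refine ⟨fun hf x y => ?_, fun hf k x y h => ?_⟩
  · rcases eq_or_ne x y with rfl | hxy
    · simp
    have hnorm : ‖x - y‖ = (p : ℝ) ^ (-((x - y).valuation : ℕ) : ℤ) :=
      norm_eq_zpow_neg_valuation (sub_ne_zero.2 hxy)
    rw [hnorm, norm_le_pow_iff_dvd]
    exact hf _ x y ((norm_le_pow_iff_dvd _ _).1 hnorm.le)
  · rw [← norm_le_pow_iff_dvd] at h ⊢
    exact (hf x y).trans h

theorem IsCompatible.continuous {f : ℤ_[p] → ℤ_[p]} (hf : IsCompatible f) : Continuous f := by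
  refine (LipschitzWith.of_dist_le_mul (K := 1) fun x y => ?_).continuous
  simpa [dist_eq_norm] using isCompatible_iff_norm_sub_le.1 hf x y

theorem IsCompatible.ext_natCast {f g : ℤ_[p] → ℤ_[p]} (hf : IsCompatible f)
    (hg : IsCompatible g) (h : ∀ n : ℕ, f n = g n) : f = g :=
  denseRange_natCast.equalizer hf.continuous hg.continuous (funext h)

end Compatible

theorem PadicInt.two_dvd_sub_one_iff (z : ℤ_[2]) : (2 : ℤ_[2]) ∣ z - 1 ↔ ¬ (2 : ℤ_[2]) ∣ z := by
  have h2 (w : ℤ_[2]) : (2 : ℤ_[2]) ∣ w ↔ toZMod w = 0 := by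
    rw [← RingHom.mem_ker, ker_toZMod, maximalIdeal_eq_span_p, Ideal.mem_span_singleton,
      Nat.cast_ofNat]
  rw [h2, h2, map_sub, map_one]
  generalize toZMod z = a
  revert a
  decide

theorem bijective_inducedMod_iff (f : ℤ_[2] → ℤ_[2]) (k : ℕ) :
    Function.Bijective (inducedMod f k) ↔
      ∀ u v : ℕ, u < 2 ^ k → v < 2 ^ k → (2 : ℤ_[2]) ^ k ∣ f u - f v → u = v := by
  have : NeZero (2 ^ k) := ⟨by positivity⟩
  have hdvd (x y : ℤ_[2]) : (2 : ℤ_[2]) ^ k ∣ x - y ↔ toZModPow k x = toZModPow k y := by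
    simpa using pow_dvd_sub_iff_toZModPow_eq (p := 2) k x y
  rw [← Finite.injective_iff_bijective]
  refine ⟨fun hinj u v hu hv h => ?_, fun h z w hzw => ZMod.val_injective _ <|
    h _ _ (ZMod.val_lt z) (ZMod.val_lt w) ((hdvd _ _).2 hzw)⟩
  have hfuv : inducedMod f k u = inducedMod f k v := by
    simpa [inducedMod, ZMod.val_cast_of_lt hu, ZMod.val_cast_of_lt hv] using (hdvd _ _).1 h
  have := congrArg ZMod.val (hinj hfuv)
  rwa [ZMod.val_cast_of_lt hu, ZMod.val_cast_of_lt hv] at this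

theorem IsCompatible.eq_of_pow_succ_dvd {f : ℤ_[2] → ℤ_[2]} (hf : IsCompatible f) {k : ℕ}
    (hstep : ∀ n : ℕ, 2 ^ k ≤ n → n < 2 ^ (k + 1) →
      ¬ (2 : ℤ_[2]) ^ (k + 1) ∣ f n - f ↑(n - 2 ^ k))
    (ih : ∀ u v : ℕ, u < 2 ^ k → v < 2 ^ k → (2 : ℤ_[2]) ^ k ∣ f u - f v → u = v)
    {u v : ℕ} (hu : u < 2 ^ (k + 1)) (hv : v < 2 ^ (k + 1))
    (h : (2 : ℤ_[2]) ^ (k + 1) ∣ f u - f v) : u = v := by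
  have hf_nat (a b : ℕ) (hab : a ≡ b [MOD 2 ^ k]) : (2 : ℤ_[2]) ^ k ∣ f a - f b := by
    simpa using hf k a b ((pow_dvd_natCast_sub_natCast_iff k a b).2 hab)
  -- `u` and `v` agree modulo `2^k`, so they are equal or differ by exactly `2^k`.
  have hlow : u % 2 ^ k = v % 2 ^ k := by
    refine ih _ _ (Nat.mod_lt _ (by positivity)) (Nat.mod_lt _ (by positivity)) ?_
    have := dvd_add (dvd_add (hf_nat _ u (Nat.mod_modEq u _))
      ((pow_dvd_pow 2 k.le_succ).trans h)) (hf_nat v _ (Nat.mod_modEq v _).symm)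
    rwa [sub_add_sub_cancel, sub_add_sub_cancel] at this
  have hsplit (w : ℕ) (hw : w < 2 ^ (k + 1)) :
      w < 2 ^ k ∧ w % 2 ^ k = w ∨ 2 ^ k ≤ w ∧ w % 2 ^ k = w - 2 ^ k := by
    rcases lt_or_ge w (2 ^ k) with hlt | hge
    · exact .inl ⟨hlt, Nat.mod_eq_of_lt hlt⟩
    · refine .inr ⟨hge, ?_⟩
      rw [Nat.mod_eq_sub_mod hge, Nat.mod_eq_of_lt (by rw [pow_succ] at hw; omega)]
  by_contra huv
  rcases hsplit u hu with ⟨hu1, hu2⟩ | ⟨hu1, hu2⟩ <;>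
    rcases hsplit v hv with ⟨hv1, hv2⟩ | ⟨hv1, hv2⟩
  · omega
  · exact hstep v hv1 hv (by rwa [show v - 2 ^ k = u by omega, dvd_sub_comm])
  · exact hstep u hu1 hu (by rwa [show u - 2 ^ k = v by omega])
  · omega

theorem IsCompatible.forall_bijective_inducedMod_iff {f : ℤ_[2] → ℤ_[2]}
    (hf : IsCompatible f) :
    (∀ k : ℕ, 1 ≤ k → Function.Bijective (inducedMod f k)) ↔
      ¬ (2 : ℤ_[2]) ∣ f 1 - f 0 ∧
        ∀ n : ℕ, 2 ≤ n → ¬ (2 : ℤ_[2]) ^ (Nat.log 2 n + 1) ∣ f n - f ↑(n - 2 ^ Nat.log 2 n) := by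
  simp only [bijective_inducedMod_iff]
  constructor
  · intro h
    refine ⟨fun h01 => ?_, fun n hn hdvd => ?_⟩
    · simpa using h 1 le_rfl 1 0 (by norm_num) (by norm_num) (by simpa using h01)
    · have hpow : 2 ^ Nat.log 2 n ≤ n := Nat.pow_log_le_self 2 (by omega)
      have hpos : 0 < 2 ^ Nat.log 2 n := by positivity
      have hlt := Nat.lt_pow_succ_log_self one_lt_two n
      have := h _ le_add_self n _ hlt ((Nat.sub_le _ _).trans_lt hlt) hdvd
      omega
  · rintro ⟨h01, hn⟩ k hk
    induction k, hk using Nat.le_induction with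
    | base =>
      intro u v hu hv huv
      interval_cases u <;> interval_cases v <;> simp_all [dvd_sub_comm]
    | succ k _ ih =>
      refine fun u v => hf.eq_of_pow_succ_dvd (fun m hm1 hm2 => ?_) ih
      have hlog : Nat.log 2 m = k := Nat.log_eq_of_pow_le_of_lt_pow hm1 hm2
      have := hn m ((Nat.le_self_pow (by omega) 2).trans hm1)
      rwa [hlog] at this

open Classical in
theorem vdpChi_eq_ite_dvd (m : ℕ) (x : ℤ_[2]) :
    vdpChi m x = if (2 : ℤ_[2]) ^ (Nat.log 2 m + 1) ∣ x - m then 1 else 0 := by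
  have h := norm_le_pow_iff_dvd (p := 2) (x - m) (Nat.log 2 m + 1)
  push_cast at h
  simp only [vdpChi, h]

theorem vdpChi_congr {k m : ℕ} (hm : Nat.log 2 m + 1 ≤ k) {x y : ℤ_[2]}
    (h : (2 : ℤ_[2]) ^ k ∣ x - y) : vdpChi m x = vdpChi m y := by
  have hxy := (pow_dvd_pow 2 hm).trans h
  simp only [vdpChi_eq_ite_dvd]
  congr 1
  exact propext ⟨fun hx => by simpa using dvd_sub hx hxy, fun hy => by simpa using dvd_add hy hxy⟩

theorem vdpChi_natCast (m n : ℕ) :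
    vdpChi m n = if n % 2 ^ (Nat.log 2 m + 1) = m then 1 else 0 := by
  have hm : m < 2 ^ (Nat.log 2 m + 1) := Nat.lt_pow_succ_log_self one_lt_two m
  have h := pow_dvd_natCast_sub_natCast_iff (p := 2) (Nat.log 2 m + 1) n m
  rw [Nat.cast_ofNat, Nat.ModEq, Nat.mod_eq_of_lt hm] at h
  simp only [vdpChi_eq_ite_dvd, h]

/-- Removing the leading binary digit of `n ≥ 2` switches off exactly one van der Put
characteristic function, namely `χ(n, ·)`. -/
theorem vdpChi_natCast_sub_natCast_sub_pow_log (m : ℕ) {n : ℕ} (hn : 2 ≤ n) :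
    vdpChi m n - vdpChi m ↑(n - 2 ^ Nat.log 2 n) = if m = n then 1 else 0 := by
  simp only [vdpChi_natCast]
  set L := Nat.log 2 n
  set j := Nat.log 2 m + 1
  have hL : 1 ≤ L := Nat.log_pos one_lt_two hn
  have hnL : 2 ^ L ≤ n := Nat.pow_log_le_self 2 (by omega)
  have hnL' : n < 2 ^ L * 2 := by rw [← pow_succ]; exact Nat.lt_pow_succ_log_self one_lt_two n
  have hmj : m < 2 ^ j := Nat.lt_pow_succ_log_self one_lt_two m
  rcases lt_or_ge (Nat.log 2 m) L with hlow | hhigh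
  · have hjL : 2 ^ j ≤ 2 ^ L := Nat.pow_le_pow_right two_pos hlow
    have hmod : (n - 2 ^ L) % 2 ^ j = n % 2 ^ j :=
      (Nat.modEq_iff_dvd' (Nat.sub_le _ _)).2 (by
        rw [Nat.sub_sub_self hnL]; exact Nat.pow_dvd_pow 2 hlow)
    rw [hmod, sub_self, if_neg (by omega)]
  · have hLj : 2 ^ L * 2 ≤ 2 ^ j := by
      rw [← pow_succ]; exact Nat.pow_le_pow_right two_pos (by omega)
    have hm : 2 ^ L ≤ m := by
      have := Nat.pow_log_le_self 2 (show m ≠ 0 by rintro rfl; simp at hhigh; omega)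
      exact (Nat.pow_le_pow_right two_pos hhigh).trans this
    rw [Nat.mod_eq_of_lt (by omega), Nat.mod_eq_of_lt (by omega),
      if_neg (show n - 2 ^ L ≠ m by omega), sub_zero]
    exact if_congr eq_comm rfl rfl

theorem summable_vdpSum (b : ℕ → ℤ_[2]) (x : ℤ_[2]) :
    Summable fun m => 2 ^ Nat.log 2 m * b m * vdpChi m x := by
  refine NonarchimedeanAddGroup.summable_of_tendsto_cofinite_zero ?_
  have hlog : Tendsto (Nat.log 2) atTop atTop := tendsto_atTop_atTop.2 fun N =>
    ⟨2 ^ N, fun m hm => Nat.le_log_of_pow_le one_lt_two hm⟩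
  have hpow : Tendsto (fun m => (2 : ℤ_[2]) ^ Nat.log 2 m) atTop (𝓝 0) :=
    (tendsto_pow_atTop_nhds_zero_of_norm_lt_one (by
      have h := norm_p (p := 2)
      rw [Nat.cast_ofNat] at h
      norm_num [h])).comp hlog
  rw [Nat.cofinite_eq_atTop, tendsto_zero_iff_norm_tendsto_zero]
  refine squeeze_zero (fun _ => norm_nonneg _) (fun m => ?_)
    (tendsto_zero_iff_norm_tendsto_zero.1 hpow)
  rw [mul_assoc, norm_mul]
  exact mul_le_of_le_one_right (norm_nonneg _) (norm_le_one _)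

/-- The terms `b₀ χ(0, x)` and `b₁ χ(1, x)` of the paper's series are those for `m = 0, 1`,
where `⌊log₂ m⌋ = 0`. -/
noncomputable def vdpSum (b : ℕ → ℤ_[2]) (x : ℤ_[2]) : ℤ_[2] :=
  ∑' m, 2 ^ Nat.log 2 m * b m * vdpChi m x

theorem vdpSum_eq (b : ℕ → ℤ_[2]) (x : ℤ_[2]) :
    vdpSum b x = b 0 * vdpChi 0 x + b 1 * vdpChi 1 x +
      ∑' m : ℕ, 2 ^ Nat.log 2 (m + 2) * b (m + 2) * vdpChi (m + 2) x := by
  have hs := summable_vdpSum b x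
  rw [vdpSum, hs.tsum_eq_zero_add, ((summable_nat_add_iff 1).2 hs).tsum_eq_zero_add]
  simp [add_assoc]

theorem isCompatible_vdpSum (b : ℕ → ℤ_[2]) : IsCompatible (vdpSum b) := by
  intro k x y h
  rw [Nat.cast_ofNat] at h
  rw [vdpSum, vdpSum, ← (summable_vdpSum b x).tsum_sub (summable_vdpSum b y)]
  refine pow_dvd_tsum fun m => ?_
  rw [Nat.cast_ofNat, mul_assoc, mul_assoc, ← mul_sub]
  rcases le_or_gt (Nat.log 2 m + 1) k with hm | hm
  · rw [vdpChi_congr hm h, sub_self, mul_zero]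
    exact dvd_zero _
  · exact (pow_dvd_pow 2 (by omega)).mul_right _

theorem vdpSum_natCast_of_lt_two (b : ℕ → ℤ_[2]) {n : ℕ} (hn : n < 2) : vdpSum b n = b n := by
  rw [vdpSum, tsum_eq_single n fun m hm => ?_]
  · rw [vdpChi_natCast, Nat.mod_eq_of_lt (Nat.lt_pow_succ_log_self one_lt_two n), if_pos rfl,
      Nat.log_of_lt hn, pow_zero, one_mul, mul_one]
  · have h2 : 2 ≤ 2 ^ (Nat.log 2 m + 1) := Nat.le_self_pow (by omega) 2
    rw [vdpChi_natCast, Nat.mod_eq_of_lt (by omega), if_neg (Ne.symm hm), mul_zero]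

theorem vdpSum_natCast_sub_natCast_sub_pow_log (b : ℕ → ℤ_[2]) {n : ℕ} (hn : 2 ≤ n) :
    vdpSum b n - vdpSum b ↑(n - 2 ^ Nat.log 2 n) = 2 ^ Nat.log 2 n * b n := by
  rw [vdpSum, vdpSum, ← (summable_vdpSum b _).tsum_sub (summable_vdpSum b _)]
  simp_rw [← mul_sub, vdpChi_natCast_sub_natCast_sub_pow_log _ hn, mul_ite, mul_one, mul_zero]
  exact tsum_ite_eq n _

theorem IsCompatible.exists_eq_vdpSum {f : ℤ_[2] → ℤ_[2]} (hf : IsCompatible f) :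
    ∃ b : ℕ → ℤ_[2], f = vdpSum b := by
  have hdvd (n : ℕ) : (2 : ℤ_[2]) ^ Nat.log 2 n ∣ f n - f ↑(n - 2 ^ Nat.log 2 n) := by
    have h : (2 : ℤ_[2]) ^ Nat.log 2 n ∣ n - ↑(n - 2 ^ Nat.log 2 n) := by
      rcases n.eq_zero_or_pos with rfl | hn
      · simp
      · rw [Nat.cast_sub (Nat.pow_log_le_self 2 hn.ne'), sub_sub_cancel]
        simp
    simpa using hf _ _ _ (by simpa using h)
  choose c hc using hdvd
  refine ⟨fun m => if m < 2 then f m else c m,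
    hf.ext_natCast (isCompatible_vdpSum _) fun n => ?_⟩
  induction n using Nat.strong_induction_on with
  | _ n ih =>
    rcases lt_or_ge n 2 with hn | hn
    · rw [vdpSum_natCast_of_lt_two _ hn, if_pos hn]
    · have hstep := vdpSum_natCast_sub_natCast_sub_pow_log (fun m => if m < 2 then f m else c m) hn
      have hlt : n - 2 ^ Nat.log 2 n < n := Nat.sub_lt (by omega) (by positivity)
      rw [if_neg (by omega)] at hstep
      linear_combination hc n - hstep + ih _ hlt

theorem forall_bijective_inducedMod_vdpSum_iff (b : ℕ → ℤ_[2]) :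
    (∀ k : ℕ, 1 ≤ k → Function.Bijective (inducedMod (vdpSum b) k)) ↔
      (2 : ℤ_[2]) ∣ b 0 + b 1 - 1 ∧ ∀ m : ℕ, 2 ≤ m → (2 : ℤ_[2]) ∣ b m - 1 := by
  rw [(isCompatible_vdpSum b).forall_bijective_inducedMod_iff]
  have h0 : vdpSum b 0 = b 0 := by simpa using vdpSum_natCast_of_lt_two b (n := 0) two_pos
  have h1 : vdpSum b 1 = b 1 := by simpa using vdpSum_natCast_of_lt_two b (n := 1) one_lt_two
  refine and_congr ?_ (forall₂_congr fun n hn => ?_)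
  · rw [h0, h1, show b 0 + b 1 - 1 = (b 1 - b 0 - 1) + 2 * b 0 by ring,
      dvd_add_left (dvd_mul_right 2 _), two_dvd_sub_one_iff]
  · rw [vdpSum_natCast_sub_natCast_sub_pow_log b hn, pow_succ,
      mul_dvd_mul_iff_left (pow_ne_zero _ two_ne_zero), two_dvd_sub_one_iff]

/-- A map `f : ℤ_2 → ℤ_2` is a measure-preserving T-function (a 1-Lipschitz function that is
bijective modulo `2^k` for every `k ≥ 1`) if and only if it can be represented as
`f x = b_0·χ(0,x) + b_1·χ(1,x) + Σ_{m≥2} 2^{⌊log_2 m⌋}·b_m·χ(m,x)` where `b_m ∈ ℤ_2` and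
(1) `b_0 + b_1 ≡ 1 (mod 2)`, (2) `b_m ≡ 1 (mod 2)` for all `m ≥ 2`. -/
theorem measure_preserving_iff_vdp_form
    (f : ℤ_[2] → ℤ_[2]) :
    ((∀ a b : ℤ_[2], ‖f a - f b‖ ≤ ‖a - b‖) ∧
        ∀ k : ℕ, 1 ≤ k → Function.Bijective (inducedMod f k)) ↔
      ∃ b : ℕ → ℤ_[2],
        (∀ x : ℤ_[2], f x = b 0 * vdpChi 0 x + b 1 * vdpChi 1 x +
            ∑' m : ℕ, 2 ^ (Nat.log 2 (m + 2)) * b (m + 2) * vdpChi (m + 2) x) ∧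
        (2 : ℤ_[2]) ∣ (b 0 + b 1 - 1) ∧
        ∀ m : ℕ, 2 ≤ m → (2 : ℤ_[2]) ∣ (b m - 1) := by
  constructor
  · rintro ⟨hlip, hbij⟩
    obtain ⟨b, rfl⟩ := (isCompatible_iff_norm_sub_le.2 hlip).exists_eq_vdpSum
    exact ⟨b, vdpSum_eq b, (forall_bijective_inducedMod_vdpSum_iff b).1 hbij⟩
  · rintro ⟨b, hrep, hb⟩
    obtain rfl : f = vdpSum b := funext fun x => (hrep x).trans (vdpSum_eq b x).symm
    exact ⟨isCompatible_iff_norm_sub_le.1 (isCompatible_vdpSum b),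
      (forall_bijective_inducedMod_vdpSum_iff b).2 hb⟩
end
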